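/- Define the vector field X₀ on ℝ⁴ by X₀(θ,x₁,x₂,x₃) = (x₁²+x₂²−2x₃²)·e₀ − 3x₂x₃·e₁ + 3x₁x₃·e₂. Then for every point p = (θ,x₁,x₂,x₃) and every v = (v₀,v₁,v₂,v₃) ∈ ℝ⁴, the contraction of ω_A with X₀ satisfies ω_A(p)(X₀(p), v) = (x₁² + x₂² + 4x₃²)·(x₁v₁ + x₂v₂ + x₃v₃). In particular ω_A(p)(X₀(p), v) = 0 for every vector v tangent to the level sets of x₁²+x₂²+x₃² (i.e. with x₁v₁+x₂v₂+x₃v₃ = 0), so X₀ spans the kernel of dλ restricted to S¹×S² and is proportional to the Reeb vector field of λ there. -/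

import Mathlib

noncomputable section

/-- The 2-form ω_A = dλ, with ω_A(e₀,e₁)=ω_A(e₂,e₃)=x₁, ω_A(e₀,e₂)=ω_A(e₃,e₁)=x₂,
ω_A(e₀,e₃)=ω_A(e₁,e₂)=−2x₃ at p = (θ,x₁,x₂,x₃). -/
def omegaA (p u v : Fin 4 → ℝ) : ℝ :=
  p 1 * (u 0 * v 1 - u 1 * v 0 + u 2 * v 3 - u 3 * v 2)
  + p 2 * (u 0 * v 2 - u 2 * v 0 + u 3 * v 1 - u 1 * v 3)
  + (-2 * p 3) * (u 0 * v 3 - u 3 * v 0 + u 1 * v 2 - u 2 * v 1)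

/-- The vector field X₀ = (x₁²+x₂²−2x₃²)e₀ − 3x₂x₃e₁ + 3x₁x₃e₂. -/
def X0 (p : Fin 4 → ℝ) : Fin 4 → ℝ :=
  ![p 1 ^ 2 + p 2 ^ 2 - 2 * p 3 ^ 2, -3 * p 2 * p 3, 3 * p 1 * p 3, 0]

theorem omegaA_X0_apply (p v : Fin 4 → ℝ) :
    omegaA p (X0 p) v
      = (p 1 ^ 2 + p 2 ^ 2 + 4 * p 3 ^ 2) * (p 1 * v 1 + p 2 * v 2 + p 3 * v 3) := by
  simp only [omegaA, X0, Matrix.cons_val]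
  ring

/-- The contraction of ω_A with X₀ is (x₁²+x₂²+4x₃²)(x₁dx₁+x₂dx₂+x₃dx₃); in particular
it vanishes on vectors tangent to the level sets of x₁²+x₂²+x₃², so X₀ is proportional
to the Reeb vector field of λ on S¹×S². -/
theorem omegaA_contraction_X0 :
    ∀ p v : Fin 4 → ℝ,
      omegaA p (X0 p) v
        = (p 1 ^ 2 + p 2 ^ 2 + 4 * p 3 ^ 2) * (p 1 * v 1 + p 2 * v 2 + p 3 * v 3) ∧
      (p 1 * v 1 + p 2 * v 2 + p 3 * v 3 = 0 → omegaA p (X0 p) v = 0) := by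
  intro p v
  refine ⟨omegaA_X0_apply p v, fun hv => ?_⟩
  rw [omegaA_X0_apply, hv, mul_zero]
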